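/- Let ε > 0 and let K ⊆ ℝ² be a nonempty compact convex set such that a ball of radius ε slides freely inside K. Let u ∈ ℝ² be a unit vector and let z ∈ K satisfy ⟨z,u⟩ = sup_{y ∈ K} ⟨y,u⟩. Then the closed ball of radius ε centred at z − εu is contained in K. -/

import Mathlib

open Pointwise MeasureTheory Metric

noncomputable section

/-- The plane `ℝ²`. -/
abbrev E2 := EuclideanSpace ℝ (Fin 2)

/-- A ball of radius `ε` slides freely inside `K` if every boundary point of `K`
is contained in a closed ball of radius `ε` that is contained in `K`. -/
def SlidesFreely (ε : ℝ) (K : Set E2) : Prop :=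
  ∀ x ∈ frontier K, ∃ c : E2, x ∈ closedBall c ε ∧ closedBall c ε ⊆ K

/-!
The maximizer `z` of `⟨·,u⟩` on `K` is a boundary point, so some ball `closedBall c ε ⊆ K`
contains it. Then `z` also maximizes `⟨·,u⟩` on that ball, and the only maximizer of `⟨·,u⟩`
on `closedBall c ε` is `c + ε • u` (equality case of Cauchy–Schwarz), so `c = z - ε • u`.
-/

section InnerProductSpace

variable {E : Type*} [NormedAddCommGroup E] [InnerProductSpace ℝ E]

theorem mem_frontier_of_isMaxOn_inner {K : Set E} {z u : E} (hz : z ∈ K) (hu : u ≠ 0)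
    (hmax : IsMaxOn (fun y => inner ℝ y u) K z) : z ∈ frontier K := by
  refine ⟨subset_closure hz, fun hint => hu ?_⟩
  have hderiv : HasFDerivAt (fun y => inner ℝ y u) (innerSL ℝ u) z := by
    convert (innerSL ℝ u).hasFDerivAt using 1
    ext y
    exact real_inner_comm u y
  have hzero := (hmax.isLocalMax (mem_interior_iff_mem_nhds.mp hint)).hasFDerivAt_eq_zero hderiv
  simpa using congrArg (fun f => f u) hzero

theorem eq_add_smul_of_isMaxOn_inner_closedBall {c z u : E} {r : ℝ} (hu : ‖u‖ = 1)
    (hz : z ∈ closedBall c r) (hmax : IsMaxOn (fun y => inner ℝ y u) (closedBall c r) z) :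
    z = c + r • u := by
  have hr : 0 ≤ r := dist_nonneg.trans hz
  have hdist : ‖z - c‖ ≤ r := by rwa [mem_closedBall, dist_eq_norm] at hz
  have hpole : c + r • u ∈ closedBall c r := by
    simp [norm_smul, hu, abs_of_nonneg hr]
  have hr_le : r ≤ inner ℝ (z - c) u := by
    have : inner ℝ (c + r • u) u ≤ inner ℝ z u := hmax hpole
    rw [inner_add_left, real_inner_smul_left, real_inner_self_eq_norm_sq, hu] at this
    rw [inner_sub_left]
    linarith
  have hcs : inner ℝ (z - c) u = ‖z - c‖ * ‖u‖ :=
    le_antisymm (real_inner_le_norm _ _) (by rw [hu]; linarith)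
  have hnorm : ‖z - c‖ = r := by
    rw [hu, mul_one] at hcs
    linarith
  have := inner_eq_norm_mul_iff_real.mp hcs
  rw [hu, one_smul, hnorm] at this
  rw [← this, add_sub_cancel]

end InnerProductSpace

theorem stmt_1 (ε : ℝ)
    (K : Set E2) (hKcomp : IsCompact K)
    (hKslide : SlidesFreely ε K)
    (u : E2) (hu : ‖u‖ = 1)
    (z : E2) (hz : z ∈ K)
    (hsup : (inner ℝ z u : ℝ) = sSup ((fun y => (inner ℝ y u : ℝ)) '' K)) :
    closedBall (z - ε • u) ε ⊆ K := by
  have hbdd : BddAbove ((fun y => (inner ℝ y u : ℝ)) '' K) :=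
    hKcomp.bddAbove_image (continuous_id.inner continuous_const).continuousOn
  have hmax : IsMaxOn (fun y => inner ℝ y u) K z :=
    fun y hy => show _ ≤ _ from hsup ▸ le_csSup hbdd (Set.mem_image_of_mem _ hy)
  have hu0 : u ≠ 0 := norm_ne_zero_iff.mp (by rw [hu]; exact one_ne_zero)
  obtain ⟨c, hzc, hcK⟩ := hKslide z (mem_frontier_of_isMaxOn_inner hz hu0 hmax)
  have hc : z = c + ε • u := eq_add_smul_of_isMaxOn_inner_closedBall hu hzc (hmax.on_subset hcK)
  rwa [hc, add_sub_cancel_right]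

end
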